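/- Privacy from conjugate predictability: Let ρ^{ABSE} be a density operator with dim A = d, and suppose there exist a conjugate basis {|x̃⟩}_{x=0}^{d−1} of ℂ^d and a POVM {Λ̃_y}_{y=0}^{d−1} on B⊗S such that ∑_{x≠y} Tr[(P̃_x^A ⊗ Λ̃_y^{BS} ⊗ 1^E) ρ] = 0. Then for every POVM {Γ_g} on E, the joint distribution p(k,g) := Tr[(P_k^A ⊗ 1^{BS} ⊗ Γ_g) ρ] satisfies H(Z^A|Γ^E) = log₂ d; equivalently, the standard-basis outcome on A is uniformly distributed and statistically independent of the outcome of Γ^E. -/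

import Mathlib

open Matrix Complex BigOperators Finset
open Kronecker
open scoped ComplexOrder

noncomputable section

/-- ρ is a density operator: positive semidefinite with unit trace. -/
def IsDensity {ι : Type*} [Fintype ι] (ρ : Matrix ι ι ℂ) : Prop :=
  ρ.PosSemidef ∧ ρ.trace = 1

/-- A POVM indexed by `μ` on a system with index set `ι`. -/
def IsPOVM {μ ι : Type*} [Fintype μ] [Fintype ι] [DecidableEq ι]
    (Λ : μ → Matrix ι ι ℂ) : Prop :=
  (∀ m, (Λ m).PosSemidef) ∧ ∑ m, Λ m = 1

/-- Projector |k⟩⟨k| onto a standard basis element. -/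
def stdProj {ι : Type*} [DecidableEq ι] (k : ι) : Matrix ι ι ℂ :=
  Matrix.single k k 1

/-- The standard basis vector |k⟩. -/
def stdVec {ι : Type*} [DecidableEq ι] (k : ι) : ι → ℂ :=
  fun i => if i = k then 1 else 0

/-- The old `Matrix.PosSemidef.sqrt` (removed from Mathlib), with its old definition. -/
def posSemidefSqrt {ι : Type*} [Fintype ι] [DecidableEq ι] {M : Matrix ι ι ℂ}
    (hM : M.PosSemidef) : Matrix ι ι ℂ :=
  (hM.1.eigenvectorUnitary : Matrix ι ι ℂ) *
    Matrix.diagonal ((↑) ∘ (Real.sqrt ·) ∘ hM.1.eigenvalues) *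
    (star hM.1.eigenvectorUnitary : Matrix ι ι ℂ)

/-- Trace norm Tr √(MᴴM). -/
def traceNorm {ι : Type*} [Fintype ι] [DecidableEq ι] (M : Matrix ι ι ℂ) : ℝ :=
  (posSemidefSqrt (Matrix.posSemidef_conjTranspose_mul_self M)).trace.re

def negMulLog2 (x : ℝ) : ℝ := -(x * Real.logb 2 x)

/-- Shannon entropy in bits. -/
def shannon {α : Type*} [Fintype α] (p : α → ℝ) : ℝ := ∑ a, negMulLog2 (p a)

/-- Conditional Shannon entropy (in bits) of the first component given the second. -/
def condEnt {α β : Type*} [Fintype α] [Fintype β] (p : α × β → ℝ) : ℝ :=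
  shannon p - shannon (fun b => ∑ a, p (a, b))

/-- Element |x̃⟩ = (1/√d) ∑ₖ e^{iθₓₖ}|k⟩ of a candidate conjugate basis. -/
def conjVec (d : ℕ) (θ : Fin d → Fin d → ℝ) (x : Fin d) : Fin d → ℂ :=
  fun k => (Real.sqrt d : ℂ)⁻¹ * Complex.exp (Complex.I * (θ x k : ℂ))

/-- The family of phases θ defines a conjugate (orthonormal) basis. -/
def IsConjBasis (d : ℕ) (θ : Fin d → Fin d → ℝ) : Prop :=
  ∀ x y : Fin d, (∑ k, star (conjVec d θ x k) * conjVec d θ y k) = if x = y then 1 else 0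

/-- Projector P̃ₓ = |x̃⟩⟨x̃|. -/
def conjProj (d : ℕ) (θ : Fin d → Fin d → ℝ) (x : Fin d) : Matrix (Fin d) (Fin d) ℂ :=
  Matrix.vecMulVec (conjVec d θ x) (star (conjVec d θ x))

/-- The canonical maximally entangled vector |Φ_d⟩. -/
def maxEntVec (d : ℕ) : Fin d × Fin d → ℂ :=
  fun P => if P.1 = P.2 then (Real.sqrt d : ℂ)⁻¹ else 0

/-- Density operator of the canonical maximally entangled state Φ_d. -/
def maxEnt (d : ℕ) : Matrix (Fin d × Fin d) (Fin d × Fin d) ℂ :=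
  Matrix.vecMulVec (maxEntVec d) (star (maxEntVec d))

/-- Twisting operator U = ∑ⱼₖ Pⱼ ⊗ Pₖ ⊗ Vⱼₖ. -/
def IsTwisting {d : ℕ} {σ : Type*} [Fintype σ] [DecidableEq σ]
    (U : Matrix (Fin d × (Fin d × σ)) (Fin d × (Fin d × σ)) ℂ) : Prop :=
  ∃ V : Fin d → Fin d → Matrix σ σ ℂ,
    (∀ j k, V j k ∈ Matrix.unitaryGroup σ ℂ) ∧
    U = ∑ j, ∑ k, stdProj j ⊗ₖ (stdProj k ⊗ₖ V j k)

/-- Exact private state γ = U(Φ_d ⊗ ξ)U†. -/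
def IsExactPrivate {d : ℕ} {σ : Type*} [Fintype σ] [DecidableEq σ]
    (γ : Matrix (Fin d × (Fin d × σ)) (Fin d × (Fin d × σ)) ℂ) : Prop :=
  ∃ (U : Matrix (Fin d × (Fin d × σ)) (Fin d × (Fin d × σ)) ℂ) (ξ : Matrix σ σ ℂ),
    IsTwisting U ∧ IsDensity ξ ∧
    γ = U * (Matrix.reindex (Equiv.prodAssoc (Fin d) (Fin d) σ)
      (Equiv.prodAssoc (Fin d) (Fin d) σ) (maxEnt d ⊗ₖ ξ)) * Uᴴ

/-- ε-secret key: within trace distance 2ε of a perfect secret key state. -/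
def IsSecretKey (ε : ℝ) {ι ηE : Type*} [Fintype ι] [DecidableEq ι] [Fintype ηE] [DecidableEq ηE]
    (ρ : Matrix (ι × (ι × ηE)) (ι × (ι × ηE)) ℂ) : Prop :=
  ∃ ρE : Matrix ηE ηE ℂ, IsDensity ρE ∧
    traceNorm (ρ - (Fintype.card ι : ℂ)⁻¹ • ∑ k, stdProj k ⊗ₖ (stdProj k ⊗ₖ ρE)) ≤ 2 * ε

/-- Standard-basis key measurement on systems A and B. -/
def keyMeasured {ι ηE : Type*} [Fintype ι] [DecidableEq ι] [Fintype ηE] [DecidableEq ηE]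
    (ρ : Matrix (ι × (ι × ηE)) (ι × (ι × ηE)) ℂ) : Matrix (ι × (ι × ηE)) (ι × (ι × ηE)) ℂ :=
  ∑ j, ∑ k, (stdProj j ⊗ₖ (stdProj k ⊗ₖ (1 : Matrix ηE ηE ℂ))) * ρ *
    (stdProj j ⊗ₖ (stdProj k ⊗ₖ (1 : Matrix ηE ηE ℂ)))

/-- ε-private state: some (equivalently, every) purification yields an ε-secret key
upon standard-basis key measurement. -/
def IsEpsPrivate (ε : ℝ) {ι σ : Type*} [Fintype ι] [DecidableEq ι] [Fintype σ] [DecidableEq σ]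
    (ψ : Matrix (ι × (ι × σ)) (ι × (ι × σ)) ℂ) : Prop :=
  ∃ (dE : ℕ) (v : ι × (ι × (σ × Fin dE)) → ℂ),
    (∀ P Q : ι × (ι × σ),
      (∑ e, v (P.1, (P.2.1, (P.2.2, e))) * star (v (Q.1, (Q.2.1, (Q.2.2, e))))) = ψ P Q) ∧
    IsSecretKey ε (keyMeasured (Matrix.of fun P Q : ι × (ι × Fin dE) =>
      ∑ s : σ, v (P.1, (P.2.1, (s, P.2.2))) * star (v (Q.1, (Q.2.1, (s, Q.2.2))))))

/-- ε-private state when the eavesdropper additionally holds a public classical register. -/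
def IsEpsPrivateGivenPublic (ε : ℝ) {ι σ μR : Type*}
    [Fintype ι] [DecidableEq ι] [Fintype σ] [DecidableEq σ] [Fintype μR] [DecidableEq μR]
    (ψ : Matrix ((ι × (ι × σ)) × μR) ((ι × (ι × σ)) × μR) ℂ) : Prop :=
  ∃ (dE : ℕ) (v : ((ι × (ι × σ)) × μR) × Fin dE → ℂ),
    (∀ P Q, (∑ e, v (P, e) * star (v (Q, e))) = ψ P Q) ∧
    IsSecretKey ε (keyMeasured (Matrix.of fun P Q : ι × (ι × (μR × Fin dE)) =>
      ∑ s : σ, v (((P.1, (P.2.1, s)), P.2.2.1), P.2.2.2) *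
        star (v (((Q.1, (Q.2.1, s)), Q.2.2.1), Q.2.2.2))))

open Classical in
/-- Von Neumann entropy in bits (via eigenvalues; zero on non-Hermitian input). -/
def vonNeumann {ι : Type*} [Fintype ι] [DecidableEq ι] (ρ : Matrix ι ι ℂ) : ℝ :=
  if h : ρ.IsHermitian then ∑ i, negMulLog2 (h.eigenvalues i) else 0

/-- Unnormalized conditional state on β given measurement of the vector u on ι. -/
def condStateVec {ι β : Type*} [Fintype ι] (u : ι → ℂ)
    (ρ : Matrix (ι × β) (ι × β) ℂ) : Matrix β β ℂ :=
  Matrix.of fun w w' => ∑ a, ∑ a', star (u a) * ρ (a, w) (a', w') * u a'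

/-- Outcome probability of the measurement vector u. -/
def measProb {ι β : Type*} [Fintype ι] [Fintype β] (u : ι → ℂ)
    (ρ : Matrix (ι × β) (ι × β) ℂ) : ℝ := (condStateVec u ρ).trace.re

/-- Holevo quantity of the ensemble induced on β by measuring the basis family W on ι. -/
def holevoB {ι β κm : Type*} [Fintype ι] [Fintype β] [DecidableEq β] [Fintype κm]
    (W : κm → ι → ℂ) (ρ : Matrix (ι × β) (ι × β) ℂ) : ℝ :=
  vonNeumann (∑ x, condStateVec (W x) ρ) -
    ∑ x, measProb (W x) ρ *
      vonNeumann ((((condStateVec (W x) ρ).trace)⁻¹) • condStateVec (W x) ρ)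

open Classical in
/-- Positive-semidefinite square root (zero on non-PSD input). -/
def psqrt {ι : Type*} [Fintype ι] [DecidableEq ι] (M : Matrix ι ι ℂ) : Matrix ι ι ℂ :=
  if h : M.PosSemidef then posSemidefSqrt h else 0

/-- n-fold tensor (Kronecker) product of a family of matrices. -/
def tensorPow {dB : ℕ} {n : ℕ} (φ : Fin n → Matrix (Fin dB) (Fin dB) ℂ) :
    Matrix (Fin n → Fin dB) (Fin n → Fin dB) ℂ :=
  Matrix.of fun w w' => ∏ i, φ i (w i) (w' i)

/-- n-fold tensor power of a bipartite state, grouped as (Aⁿ) × (Bⁿ). -/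
def tpow {α β : Type*} (ψ : Matrix (α × β) (α × β) ℂ) (n : ℕ) :
    Matrix ((Fin n → α) × (Fin n → β)) ((Fin n → α) × (Fin n → β)) ℂ :=
  Matrix.of fun P Q => ∏ i, ψ (P.1 i, P.2 i) (Q.1 i, Q.2 i)

/-- Output of a one-way protocol with Alice-instrument Kraus operators E and Bob isometries V;
the classical message is kept in a public register. -/
def protoOut {𝒜 ℬ 𝒜' ℬ' M κI : Type*} [Fintype 𝒜] [Fintype ℬ] [Fintype 𝒜'] [Fintype ℬ']
    [Fintype κI] [DecidableEq M]
    (E : M → κI → Matrix 𝒜' 𝒜 ℂ) (V : M → Matrix ℬ' ℬ ℂ)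
    (ρ : Matrix (𝒜 × ℬ) (𝒜 × ℬ) ℂ) : Matrix ((𝒜' × ℬ') × M) ((𝒜' × ℬ') × M) ℂ :=
  Matrix.of fun P Q =>
    if P.2 = Q.2 then
      (∑ i, ((E P.2 i ⊗ₖ V P.2) * ρ * (E P.2 i ⊗ₖ V P.2)ᴴ)) P.1 Q.1
    else 0

/-- Partial trace over the innermost factor. -/
def ptraceInner {α β γ : Type*} [Fintype γ] (M : Matrix (α × (β × γ)) (α × (β × γ)) ℂ) :
    Matrix (α × β) (α × β) ℂ :=
  Matrix.of fun P Q => ∑ c, M (P.1, (P.2, c)) (Q.1, (Q.2, c))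

/-- Partial trace over the first factor. -/
def ptraceL {α β : Type*} [Fintype α] (M : Matrix (α × β) (α × β) ℂ) : Matrix β β ℂ :=
  Matrix.of fun b b' => ∑ a, M (a, b) (a, b')
/-- Dot product of dit strings. -/
def zdot {d n : ℕ} (x y : Fin n → ZMod d) : ZMod d := ∑ a, x a * y a

/-- Syndrome map defined by a family of stabilizer strings. -/
def synMap {d n m : ℕ} (s : Fin m → (Fin n → ZMod d)) (k : Fin n → ZMod d) : Fin m → ZMod d :=
  fun i => zdot (s i) k

/-- Fourier (conjugate) basis vector |x̃⟩ on n qudits, with ω = e^{2πi/d}. -/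
def fourierVec (d n : ℕ) (x : Fin n → ZMod d) : (Fin n → ZMod d) → ℂ :=
  fun k => (Real.sqrt (d ^ n) : ℂ)⁻¹ *
    Complex.exp (2 * Real.pi * Complex.I / d) ^ (zdot x k).val

/-- Fourier basis projector P̃ₓ. -/
def fourierProj (d n : ℕ) (x : Fin n → ZMod d) :
    Matrix (Fin n → ZMod d) (Fin n → ZMod d) ℂ :=
  Matrix.vecMulVec (fourierVec d n x) (star (fourierVec d n x))

/-- Projector onto the span of standard basis vectors with a given classical label. -/
def classProj {K μ : Type*} [Fintype K] [DecidableEq K] [DecidableEq μ] (f : K → μ) (a : μ) :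
    Matrix K K ℂ := ∑ k, if f k = a then stdProj k else 0

/-- Projector Π̃_β onto the span of Fourier basis vectors with phase syndrome β. -/
def phaseProj (d n mx : ℕ) [NeZero d] (t : Fin mx → (Fin n → ZMod d)) (b : Fin mx → ZMod d) :
    Matrix (Fin n → ZMod d) (Fin n → ZMod d) ℂ :=
  ∑ x, if synMap t x = b then fourierProj d n x else 0

/-- The purification vector ∑ₖ √pₖ |k⟩|φₖ⟩. -/
def purVec {K W : Type*} (p : K → ℝ) (φ : K → W → ℂ) : K × W → ℂ :=
  fun P => (Real.sqrt (p P.1) : ℂ) * φ P.1 P.2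

/-- Reduced state on A ⊗ B of the pure state with amplitudes v on A ⊗ (B ⊗ (S ⊗ E)). -/
def redAB {K : Type*} {dB dS dE : ℕ} (v : K × (Fin dB × (Fin dS × Fin dE)) → ℂ) :
    Matrix (K × Fin dB) (K × Fin dB) ℂ :=
  Matrix.of fun P Q => ∑ sS : Fin dS, ∑ e : Fin dE,
    v (P.1, (P.2, (sS, e))) * star (v (Q.1, (Q.2, (sS, e))))

/-- Reduced state on A ⊗ B ⊗ S of the pure state with amplitudes v on A ⊗ (B ⊗ (S ⊗ E)). -/
def redABS {K : Type*} {dB dS dE : ℕ} (v : K × (Fin dB × (Fin dS × Fin dE)) → ℂ) :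
    Matrix (K × (Fin dB × Fin dS)) (K × (Fin dB × Fin dS)) ℂ :=
  Matrix.of fun P Q => ∑ e : Fin dE,
    v (P.1, (P.2.1, (P.2.2, e))) * star (v (Q.1, (Q.2.1, (Q.2.2, e))))

/-- The post-measurement vector |Ψ₂⟩ = ∑_{α,β,k} (Π_α Π̃_β ⊗ √Λ_{α,k} ⊗ 1)|Ψ⟩|k⟩^{B₂}|α⟩^R|β⟩^T,
with index grouping A × ((B × (S × E)) × (B₂ × (R × T))). -/
def oneShotVec {d n mz mx : ℕ} [NeZero d] {dB dS dE : ℕ}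
    (s : Fin mz → (Fin n → ZMod d)) (t : Fin mx → (Fin n → ZMod d))
    (Λ : (Fin mz → ZMod d) → (Fin n → ZMod d) → Matrix (Fin dB) (Fin dB) ℂ)
    (v : (Fin n → ZMod d) × (Fin dB × (Fin dS × Fin dE)) → ℂ) :
    (Fin n → ZMod d) × ((Fin dB × (Fin dS × Fin dE)) ×
      ((Fin n → ZMod d) × ((Fin mz → ZMod d) × (Fin mx → ZMod d)))) → ℂ :=
  fun P =>
    ∑ a' : Fin n → ZMod d, ∑ b' : Fin dB,
      ((classProj (synMap s) P.2.2.2.1 * phaseProj d n mx t P.2.2.2.2) P.1 a') *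
      (psqrt (Λ P.2.2.2.1 P.2.2.1) P.2.1.1 b') *
      v (a', (b', P.2.1.2))

/-- The ccq state obtained from |Ψ₂⟩ by measuring the logical values λ on A and on B₂
(recording them in registers Ā and B̄), and tracing out A, B, S, B₂ and T.
Eve keeps E and the public register R. -/
def oneShotOut {d n mz mx r : ℕ} [NeZero d] {dB dS dE : ℕ}
    (u : Fin r → (Fin n → ZMod d))
    (Ψ2 : (Fin n → ZMod d) × ((Fin dB × (Fin dS × Fin dE)) ×
      ((Fin n → ZMod d) × ((Fin mz → ZMod d) × (Fin mx → ZMod d)))) → ℂ) :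
    Matrix ((Fin r → ZMod d) × ((Fin r → ZMod d) × (Fin dE × (Fin mz → ZMod d))))
           ((Fin r → ZMod d) × ((Fin r → ZMod d) × (Fin dE × (Fin mz → ZMod d)))) ℂ :=
  Matrix.of fun P Q =>
    if P.1 = Q.1 ∧ P.2.1 = Q.2.1 then
      ∑ a : Fin n → ZMod d, ∑ k2 : Fin n → ZMod d, ∑ b : Fin dB,
        ∑ sS : Fin dS, ∑ βr : Fin mx → ZMod d,
        (if synMap u a = P.1 ∧ synMap u k2 = P.2.1 then
          Ψ2 (a, ((b, (sS, P.2.2.1)), (k2, (P.2.2.2, βr)))) *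
          star (Ψ2 (a, ((b, (sS, Q.2.2.1)), (k2, (Q.2.2.2, βr)))))
        else 0)
    else 0

/-- |Ψ₂⟩ = ∑_{k,ℓ} √pₖ |k⟩(√Λ_ℓ ⊗ 1)|φₖ⟩|ℓ⟩: coherent measurement of the POVM Λ. -/
def coherentMeasVec {N dB dE : ℕ} (p : Fin N → ℝ) (φ : Fin N → (Fin dB × Fin dE) → ℂ)
    (Λ : Fin N → Matrix (Fin dB) (Fin dB) ℂ) : Fin N × ((Fin dB × Fin dE) × Fin N) → ℂ :=
  fun P => (Real.sqrt (p P.1) : ℂ) * ∑ b', psqrt (Λ P.2.2) P.2.1.1 b' * φ P.1 (b', P.2.1.2)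

/-- |Ψ₂'⟩ = ∑ₖ √pₖ |k⟩|φₖ⟩|k⟩: perfect copy of the index k. -/
def copyVec {N dB dE : ℕ} (p : Fin N → ℝ) (φ : Fin N → (Fin dB × Fin dE) → ℂ) :
    Fin N × ((Fin dB × Fin dE) × Fin N) → ℂ :=
  fun P => if P.2.2 = P.1 then (Real.sqrt (p P.1) : ℂ) * φ P.1 P.2.1 else 0

/-! Perfect prediction of the conjugate observable makes every error operator
`(P̃ₓ ⊗ Λ_y ⊗ 1) ρ` with `x ≠ y` vanish, being a product of positive operators with zero trace.
Hence any observable `P_k ⊗ 1 ⊗ C`, which commutes with Bob's measurement, has the same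
expectation on `ρ` as on its dephasing `∑ₓ P̃ₓ ρ P̃ₓ`; since `P̃ₓ P_k P̃ₓ = P̃ₓ / d`, the key `k` is
uniform and independent of every measurement on `E`. -/

namespace Matrix

theorem sum_kronecker {R ι l m : Type*} [CommSemiring R] (s : Finset ι) (A : ι → Matrix l l R)
    (B : Matrix m m R) : (∑ i ∈ s, A i) ⊗ₖ B = ∑ i ∈ s, A i ⊗ₖ B := by
  ext ⟨i₁, i₂⟩ ⟨j₁, j₂⟩
  simp [sum_apply, Finset.sum_mul]

theorem kronecker_sum {R ι l m : Type*} [CommSemiring R] (s : Finset ι) (A : Matrix l l R)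
    (B : ι → Matrix m m R) : A ⊗ₖ (∑ i ∈ s, B i) = ∑ i ∈ s, A ⊗ₖ B i := by
  ext ⟨i₁, i₂⟩ ⟨j₁, j₂⟩
  simp [sum_apply, Finset.mul_sum]

theorem kronecker_kronecker_mul {R l m n : Type*} [CommSemiring R] [Fintype l] [Fintype m]
    [Fintype n] (A A' : Matrix l l R) (B B' : Matrix m m R) (C C' : Matrix n n R) :
    (A ⊗ₖ (B ⊗ₖ C)) * (A' ⊗ₖ (B' ⊗ₖ C')) = (A * A') ⊗ₖ ((B * B') ⊗ₖ (C * C')) := by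
  rw [← mul_kronecker_mul, ← mul_kronecker_mul]

variable {𝕜 n : Type*} [RCLike 𝕜] [Fintype n] [DecidableEq n]

theorem sum_vecMulVec_star_eq_one (v : n → n → 𝕜)
    (hv : ∀ x y, ∑ k, star (v x k) * v y k = if x = y then 1 else 0) :
    ∑ x, vecMulVec (v x) (star (v x)) = 1 := by
  set A : Matrix n n 𝕜 := of fun k x => v x k
  have hAA : Aᴴ * A = 1 := by
    ext x y
    simpa [A, mul_apply, one_apply] using hv x y
  calc ∑ x, vecMulVec (v x) (star (v x)) = A * Aᴴ := by
        ext i j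
        simp [A, sum_apply, mul_apply, vecMulVec_apply]
    _ = 1 := mul_eq_one_comm.mp hAA

theorem vecMulVec_mul_single_mul_vecMulVec (u w : n → 𝕜) (k : n) :
    vecMulVec u w * single k k 1 * vecMulVec u w = (w k * u k) • vecMulVec u w := by
  rw [vecMulVec_mul, vecMulVec_mul_vecMulVec]
  ext i j
  simp [vecMulVec_apply, dotProduct, vecMul, single_apply, ite_and]
  ring

open scoped MatrixOrder in
theorem PosSemidef.exists_trace_mul_eq_trace_conjTranspose_mul_self {A B : Matrix n n 𝕜}
    (hA : A.PosSemidef) (hB : B.PosSemidef) :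
    ∃ X Y : Matrix n n 𝕜, A * B = Xᴴ * (X * Yᴴ) * Y ∧
      (A * B).trace = ((X * Yᴴ)ᴴ * (X * Yᴴ)).trace := by
  obtain ⟨X, rfl⟩ := CStarAlgebra.nonneg_iff_eq_star_mul_self.mp hA.nonneg
  obtain ⟨Y, rfl⟩ := CStarAlgebra.nonneg_iff_eq_star_mul_self.mp hB.nonneg
  refine ⟨X, Y, by simp only [star_eq_conjTranspose, Matrix.mul_assoc], ?_⟩
  rw [conjTranspose_mul, conjTranspose_conjTranspose, Matrix.mul_assoc Y, trace_mul_comm Y]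
  simp only [star_eq_conjTranspose, Matrix.mul_assoc]

theorem PosSemidef.trace_mul_nonneg {A B : Matrix n n 𝕜} (hA : A.PosSemidef)
    (hB : B.PosSemidef) : 0 ≤ (A * B).trace := by
  obtain ⟨X, Y, -, htr⟩ := hA.exists_trace_mul_eq_trace_conjTranspose_mul_self hB
  exact htr ▸ (posSemidef_conjTranspose_mul_self _).trace_nonneg

theorem PosSemidef.mul_eq_zero_of_trace_mul_eq_zero {A B : Matrix n n 𝕜}
    (hA : A.PosSemidef) (hB : B.PosSemidef) (h : (A * B).trace = 0) : A * B = 0 := by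
  obtain ⟨X, Y, hAB, htr⟩ := hA.exists_trace_mul_eq_trace_conjTranspose_mul_self hB
  rw [htr, trace_conjTranspose_mul_self_eq_zero_iff] at h
  rw [hAB, h, Matrix.mul_zero, Matrix.zero_mul]

end Matrix

/-- If the outcome of the measurement `L` always agrees with that of `P` on `ρ`, then measuring `P`
first does not change the statistics of any observable `M` compatible with `L`. -/
theorem Matrix.trace_mul_eq_sum_trace_of_perfect_prediction {R n ι : Type*} [CommSemiring R]
    [Fintype n] [DecidableEq n] [Fintype ι] (P L : ι → Matrix n n R) {ρ M : Matrix n n R}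
    (hP : ∑ x, P x = 1) (hL : ∑ y, L y = 1) (hML : ∀ y, Commute M (L y))
    (hleft : ∀ x y, x ≠ y → L y * P x * ρ = 0) (hright : ∀ x y, x ≠ y → ρ * P x * L y = 0) :
    (M * ρ).trace = ∑ x, (P x * M * P x * ρ).trace := by
  have hLP : ∀ x, L x * (P x * ρ) = P x * ρ := fun x => by
    calc L x * (P x * ρ) = ∑ y, L y * P x * ρ := by
          rw [Finset.sum_eq_single x (fun y _ hyx => hleft x y hyx.symm) (by simp),
            Matrix.mul_assoc]
      _ = P x * ρ := by rw [← Finset.sum_mul, ← Finset.sum_mul, hL, Matrix.one_mul]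
  have hoff : ∀ x y, x ≠ y → (M * (P x * ρ * P y)).trace = 0 := fun x y hxy => by
    calc (M * (P x * ρ * P y)).trace = (M * L x * (P x * ρ) * P y).trace := by
          rw [Matrix.mul_assoc M (L x), hLP]
          simp only [Matrix.mul_assoc]
      _ = (M * (P x * (ρ * P y * L x))).trace := by
          rw [(hML x).eq, Matrix.mul_assoc (L x), Matrix.mul_assoc (L x), trace_mul_comm (L x)]
          simp only [Matrix.mul_assoc]
      _ = 0 := by rw [hright y x hxy.symm, Matrix.mul_zero, Matrix.mul_zero, trace_zero]
  calc (M * ρ).trace = (M * ((∑ x, P x) * ρ * ∑ y, P y)).trace := by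
        rw [hP, Matrix.one_mul, Matrix.mul_one]
    _ = ∑ x, ∑ y, (M * (P x * ρ * P y)).trace := by
        rw [Finset.sum_mul, Finset.sum_mul_sum]
        simp only [Finset.mul_sum, trace_sum]
    _ = ∑ x, (M * (P x * ρ * P x)).trace :=
        Finset.sum_congr rfl fun x _ =>
          Finset.sum_eq_single x (fun y _ hyx => hoff x y hyx.symm) (by simp)
    _ = ∑ x, (P x * M * P x * ρ).trace := by
        refine Finset.sum_congr rfl fun x _ => ?_
        rw [← Matrix.mul_assoc, trace_mul_comm]
        simp only [Matrix.mul_assoc]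

section ConjugateBasis

variable {d : ℕ} {θ : Fin d → Fin d → ℝ}

theorem star_conjVec_mul_conjVec (x k : Fin d) :
    star (conjVec d θ x k) * conjVec d θ x k = (d : ℂ)⁻¹ := by
  rw [Complex.star_def, ← Complex.normSq_eq_conj_mul_self, conjVec, Complex.normSq_mul,
    Complex.normSq_eq_norm_sq (cexp _), Complex.norm_exp_I_mul_ofReal, ← Complex.ofReal_inv,
    Complex.normSq_ofReal, ← mul_inv, Real.mul_self_sqrt d.cast_nonneg]
  simp

theorem conjProj_posSemidef (x : Fin d) : (conjProj d θ x).PosSemidef :=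
  posSemidef_vecMulVec_self_star _

theorem IsConjBasis.sum_conjProj (hθ : IsConjBasis d θ) : ∑ x, conjProj d θ x = 1 :=
  sum_vecMulVec_star_eq_one _ hθ

theorem conjProj_mul_stdProj_mul_conjProj (x k : Fin d) :
    conjProj d θ x * stdProj k * conjProj d θ x = (d : ℂ)⁻¹ • conjProj d θ x := by
  rw [conjProj, stdProj, vecMulVec_mul_single_mul_vecMulVec, Pi.star_apply,
    star_conjVec_mul_conjVec]

end ConjugateBasis

section Privacy

variable {d : ℕ} {β ε : Type*} [Fintype β] [DecidableEq β] [Fintype ε] [DecidableEq ε]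
  {ρ : Matrix (Fin d × (β × ε)) (Fin d × (β × ε)) ℂ} {θ : Fin d → Fin d → ℝ}
  {Λ : Fin d → Matrix β β ℂ}

theorem conjProj_kronecker_mul_eq_zero_of_error_eq_zero (hρ : ρ.PosSemidef)
    (hΛ : ∀ y, (Λ y).PosSemidef)
    (herr : (∑ x, ∑ y, if x ≠ y then
        ((conjProj d θ x ⊗ₖ (Λ y ⊗ₖ (1 : Matrix ε ε ℂ))) * ρ).trace.re else 0) = 0)
    {x y : Fin d} (hxy : x ≠ y) :
    (conjProj d θ x ⊗ₖ (Λ y ⊗ₖ (1 : Matrix ε ε ℂ))) * ρ = 0 ∧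
      ρ * (conjProj d θ x ⊗ₖ (Λ y ⊗ₖ (1 : Matrix ε ε ℂ))) = 0 := by
  set E : Fin d → Fin d → Matrix (Fin d × (β × ε)) (Fin d × (β × ε)) ℂ :=
    fun x y => conjProj d θ x ⊗ₖ (Λ y ⊗ₖ 1)
  have hE : ∀ x y, (E x y).PosSemidef := fun x y =>
    (conjProj_posSemidef x).kronecker ((hΛ y).kronecker PosSemidef.one)
  have hnonneg : ∀ x y, 0 ≤ (E x y * ρ).trace := fun x y => (hE x y).trace_mul_nonneg hρ
  have hterm : ∀ x y, 0 ≤ if x ≠ y then (E x y * ρ).trace.re else 0 := fun x y => by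
    split_ifs
    exacts [(Complex.nonneg_iff.mp (hnonneg x y)).1, le_rfl]
  have hrow := congrFun ((Fintype.sum_eq_zero_iff_of_nonneg fun x =>
    Finset.sum_nonneg fun y _ => hterm x y).mp herr) x
  have hre := congrFun ((Fintype.sum_eq_zero_iff_of_nonneg (hterm x)).mp hrow) y
  simp only [Pi.zero_apply, if_pos hxy] at hre
  have htr : (E x y * ρ).trace = 0 :=
    Complex.ext hre (Complex.nonneg_iff.mp (hnonneg x y)).2.symm
  exact ⟨(hE x y).mul_eq_zero_of_trace_mul_eq_zero hρ htr,
    hρ.mul_eq_zero_of_trace_mul_eq_zero (hE x y) (trace_mul_comm ρ _ ▸ htr)⟩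

theorem trace_stdProj_kronecker_mul_of_error_eq_zero (hρ : ρ.PosSemidef)
    (hθ : IsConjBasis d θ) (hΛ : IsPOVM Λ)
    (herr : (∑ x, ∑ y, if x ≠ y then
        ((conjProj d θ x ⊗ₖ (Λ y ⊗ₖ (1 : Matrix ε ε ℂ))) * ρ).trace.re else 0) = 0)
    (C : Matrix ε ε ℂ) (k : Fin d) :
    ((stdProj k ⊗ₖ ((1 : Matrix β β ℂ) ⊗ₖ C)) * ρ).trace
      = (d : ℂ)⁻¹ * (((1 : Matrix (Fin d) (Fin d) ℂ) ⊗ₖ ((1 : Matrix β β ℂ) ⊗ₖ C)) * ρ).trace := by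
  have hzero := fun x y (hxy : x ≠ y) =>
    conjProj_kronecker_mul_eq_zero_of_error_eq_zero hρ hΛ.1 herr hxy
  rw [trace_mul_eq_sum_trace_of_perfect_prediction
    (fun x => conjProj d θ x ⊗ₖ ((1 : Matrix β β ℂ) ⊗ₖ (1 : Matrix ε ε ℂ)))
    (fun y => (1 : Matrix (Fin d) (Fin d) ℂ) ⊗ₖ (Λ y ⊗ₖ (1 : Matrix ε ε ℂ)))
    ?hP ?hL ?hML ?hleft ?hright]
  case hP => rw [← sum_kronecker, hθ.sum_conjProj, one_kronecker_one, one_kronecker_one]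
  case hL => rw [← kronecker_sum, ← sum_kronecker, hΛ.2, one_kronecker_one, one_kronecker_one]
  case hML =>
    intro y
    simp only [Commute, SemiconjBy, kronecker_kronecker_mul, Matrix.one_mul, Matrix.mul_one]
  case hleft =>
    intro x y hxy
    rw [kronecker_kronecker_mul, Matrix.one_mul, Matrix.mul_one, Matrix.one_mul]
    exact (hzero x y hxy).1
  case hright =>
    intro x y hxy
    rw [Matrix.mul_assoc, kronecker_kronecker_mul, Matrix.one_mul, Matrix.mul_one, Matrix.mul_one]
    exact (hzero x y hxy).2
  simp only [kronecker_kronecker_mul, Matrix.one_mul, Matrix.mul_one,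
    conjProj_mul_stdProj_mul_conjProj]
  rw [← trace_sum, ← Finset.sum_mul, ← sum_kronecker, ← Finset.smul_sum, hθ.sum_conjProj,
    smul_kronecker, smul_mul_assoc, trace_smul, smul_eq_mul]

end Privacy

theorem negMulLog2_mul (x y : ℝ) : negMulLog2 (x * y) = y * negMulLog2 x + x * negMulLog2 y := by
  have h : ∀ t, negMulLog2 t = Real.negMulLog t / Real.log 2 := fun t => by
    simp only [negMulLog2, Real.negMulLog, Real.logb]
    ring
  simp only [h, Real.negMulLog_mul]
  ring

theorem condEnt_inv_card_mul {α β : Type*} [Fintype α] [Nonempty α] [Fintype β] (q : β → ℝ) :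
    condEnt (fun ab : α × β => (Fintype.card α : ℝ)⁻¹ * q ab.2)
      = (∑ b, q b) * Real.logb 2 (Fintype.card α) := by
  set c : ℝ := (Fintype.card α : ℝ)
  have hc : c ≠ 0 := Nat.cast_ne_zero.mpr Fintype.card_ne_zero
  have hmarg : (fun b => ∑ _a : α, c⁻¹ * q b) = q := by
    funext b
    rw [Finset.sum_const, Finset.card_univ, nsmul_eq_mul, ← mul_assoc, mul_inv_cancel₀ hc,
      one_mul]
  have hc_inv : negMulLog2 c⁻¹ = c⁻¹ * Real.logb 2 c := by
    rw [negMulLog2, Real.logb_inv]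
    ring
  rw [condEnt, hmarg, shannon, shannon, Fintype.sum_prod_type]
  simp only [negMulLog2_mul, hc_inv, Finset.sum_const, Finset.card_univ, nsmul_eq_mul,
    Finset.sum_add_distrib, ← Finset.sum_mul, ← Finset.mul_sum]
  field_simp
  ring

/-- **Privacy from conjugate predictability.**
If a measurement on B ⊗ S perfectly predicts the conjugate-basis observable X̃^A, then for
every POVM Γ on the purifying system E the standard-basis outcome on A has conditional
entropy log₂ d given Γ; equivalently it is uniform and independent of Γ's outcome. -/
theorem privacy_from_conjugate_predictability
    {d dBS dE : ℕ} (hd : 0 < d)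
    (ρ : Matrix (Fin d × (Fin dBS × Fin dE)) (Fin d × (Fin dBS × Fin dE)) ℂ)
    (hρ : IsDensity ρ)
    (θ : Fin d → Fin d → ℝ) (hθ : IsConjBasis d θ)
    (Λ : Fin d → Matrix (Fin dBS) (Fin dBS) ℂ) (hΛ : IsPOVM Λ)
    (herr : (∑ x, ∑ y, if x ≠ y then
        ((conjProj d θ x ⊗ₖ (Λ y ⊗ₖ (1 : Matrix (Fin dE) (Fin dE) ℂ))) * ρ).trace.re
      else 0) = 0)
    {μE : Type} [Fintype μE]
    (Γ : μE → Matrix (Fin dE) (Fin dE) ℂ) (hΓ : IsPOVM Γ) :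
    condEnt (fun kg : Fin d × μE =>
        ((stdProj kg.1 ⊗ₖ ((1 : Matrix (Fin dBS) (Fin dBS) ℂ) ⊗ₖ Γ kg.2)) * ρ).trace.re)
      = Real.logb 2 d ∧
    ∀ (k : Fin d) (g : μE),
      ((stdProj k ⊗ₖ ((1 : Matrix (Fin dBS) (Fin dBS) ℂ) ⊗ₖ Γ g)) * ρ).trace.re
        = (d : ℝ)⁻¹ *
          ∑ k', ((stdProj k' ⊗ₖ ((1 : Matrix (Fin dBS) (Fin dBS) ℂ) ⊗ₖ Γ g)) * ρ).trace.re := by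
  have : NeZero d := ⟨hd.ne'⟩
  set q : μE → ℝ := fun g =>
    (((1 : Matrix (Fin d) (Fin d) ℂ) ⊗ₖ ((1 : Matrix (Fin dBS) (Fin dBS) ℂ) ⊗ₖ Γ g)) * ρ).trace.re
  have hp : ∀ k g, ((stdProj k ⊗ₖ ((1 : Matrix (Fin dBS) (Fin dBS) ℂ) ⊗ₖ Γ g)) * ρ).trace.re
      = (d : ℝ)⁻¹ * q g := fun k g => by
    rw [trace_stdProj_kronecker_mul_of_error_eq_zero hρ.1 hθ hΛ herr, ← Complex.ofReal_natCast,
      ← Complex.ofReal_inv, Complex.re_ofReal_mul]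
  have hq : ∑ g, q g = 1 := by
    rw [← Complex.re_sum, ← trace_sum, ← Finset.sum_mul, ← kronecker_sum, ← kronecker_sum, hΓ.2,
      one_kronecker_one, one_kronecker_one, Matrix.one_mul, hρ.2, Complex.one_re]
  simp only [hp]
  refine ⟨?_, fun k g => ?_⟩
  · simpa [hq] using condEnt_inv_card_mul (α := Fin d) q
  · rw [Finset.sum_const, Finset.card_univ, Fintype.card_fin, nsmul_eq_mul, ← mul_assoc,
      inv_mul_cancel₀ (Nat.cast_ne_zero.mpr hd.ne'), one_mul]
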